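/- arXiv:1608.08042 — 4 statements merged into one kernel-verified Lean document; each statement's English description precedes it below -/
import Mathlib

section
/- If the sensing cost exceeds or equals the leasing cost (c_s ≥ c_l > 0) and all sensing realizations satisfy α_i ≤ 1, then for any nonnegative weights w_i, the PT utility U(B_s) = Σ_i w_i · v(π·D − B_s·c_s − max{D − B_s·α_i, 0}·c_l − R_p) with risk-free reference point R_p = D·(π − c_l) is maximized at B_s = 0. -/
open Finset

/-- If the sensing cost is at least the leasing cost, the PT utility with the
risk-free reference point `R_p = D (π - cl)` is maximized at `B_s = 0`. -/
theorem sensing_useless_when_sensing_expensive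
    (I : ℕ) (α wgt : Fin I → ℝ)
    (D cl cs p l β γ : ℝ)
    (hD : 0 < D) (hcl : 0 < cl) (hcs : cl ≤ cs)
    (hl : 1 ≤ l) (hβ : 0 < β) (hβ1 : β ≤ 1) (hγ : 0 < γ) (hγ1 : γ ≤ 1)
    (hα : ∀ i, α i ∈ Set.Icc (0:ℝ) 1)
    (hw : ∀ i, 0 ≤ wgt i) (hw' : ∃ i, 0 < wgt i)
    (v : ℝ → ℝ) (hv : ∀ x : ℝ, v x = if 0 ≤ x then x ^ β else -l * (-x) ^ γ)
    (U : ℝ → ℝ)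
    (hU : ∀ Bs : ℝ, U Bs =
      ∑ i, wgt i * v (p * D - Bs * cs - max (D - Bs * α i) 0 * cl - D * (p - cl))) :
    ∀ Bs : ℝ, 0 ≤ Bs → U Bs ≤ U 0 := by
  have hvle : ∀ x : ℝ, x ≤ 0 → v x ≤ 0 := by
    intro x hx
    rw [hv]
    split_ifs with h
    · have hx0 : x = 0 := le_antisymm hx h
      simp [hx0, Real.zero_rpow hβ.ne']
    · have h1 : (0:ℝ) ≤ (-x) ^ γ := Real.rpow_nonneg (by linarith) γ
      nlinarith
  intro Bs hBs
  have hU0 : U 0 = 0 := by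
    rw [hU]
    apply Finset.sum_eq_zero
    intro i _
    have hmax : max (D - 0 * α i) 0 = D := by
      rw [zero_mul, sub_zero]; exact max_eq_left hD.le
    have harg : p * D - 0 * cs - max (D - 0 * α i) 0 * cl - D * (p - cl) = 0 := by
      rw [hmax]; ring
    rw [harg, hv, if_pos le_rfl, Real.zero_rpow hβ.ne', mul_zero]
  rw [hU0, hU]
  apply Finset.sum_nonpos
  intro i _
  have hαi := hα i
  have h1 : D - Bs ≤ D - Bs * α i := by nlinarith [hαi.2]
  have h2 : D - Bs ≤ max (D - Bs * α i) 0 := le_trans h1 (le_max_left _ _)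
  have hx : p * D - Bs * cs - max (D - Bs * α i) 0 * cl - D * (p - cl) ≤ 0 := by
    nlinarith [mul_le_mul_of_nonneg_right h2 hcl.le,
      mul_le_mul_of_nonneg_left hcs hBs]
  exact mul_nonpos_of_nonneg_of_nonpos (hw i) (hvle _ hx)
end

section
/- In the binary outcome case (α₁ = 0 with distorted weight w₁ > 0, α₂ = 1 with distorted weight w₂ > 0), with reference point R_p = D(π − c_l), the PT utility for B_s ∈ [0, D] equals U(B_s) = [w₂·(c_l − c_s)^β − λ·w₁·c_s^β]·B_s^β, and hence the maximizer over [0,D] is B_s* = D if w₂·(c_l − c_s)^β ≥ λ·w₁·c_s^β, and B_s* = 0 otherwise. -/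
/-- Binary-outcome case (`α₁ = 0`, `α₂ = 1`, `β = γ`): on `[0,D]` the PT utility has the
closed form `U(B) = (w₂(cl-cs)^β - λ w₁ cs^β)·B^β`, so the maximizer over `[0,D]` is `D`
when `w₂(cl-cs)^β ≥ λ w₁ cs^β` and `0` otherwise. -/
theorem binary_outcome_closed_form_and_maximizer
    (D cl cs p l β w₁ w₂ : ℝ)
    (hD : 0 < D) (hcs : 0 < cs) (hcscl : cs < cl) (hclp : cl < p)
    (hl : 1 < l) (hβ : 0 < β) (hβ1 : β < 1)
    (hw₁ : 0 < w₁) (hw₂ : 0 < w₂)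
    (v : ℝ → ℝ) (hv : ∀ x : ℝ, v x = if 0 ≤ x then x ^ β else -l * (-x) ^ β)
    (U : ℝ → ℝ)
    (hU : ∀ Bs : ℝ, U Bs = w₁ * v (-(Bs * cs)) + w₂ * v (Bs * (cl - cs))) :
    (∀ Bs ∈ Set.Icc (0:ℝ) D,
        U Bs = (w₂ * (cl - cs) ^ β - l * w₁ * cs ^ β) * Bs ^ β) ∧
    (∀ Bs ∈ Set.Icc (0:ℝ) D,
        U Bs ≤ U (if l * w₁ * cs ^ β ≤ w₂ * (cl - cs) ^ β then D else 0)) := by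
  have hcl : 0 < cl - cs := by linarith
  have hcf : ∀ Bs ∈ Set.Icc (0:ℝ) D,
      U Bs = (w₂ * (cl - cs) ^ β - l * w₁ * cs ^ β) * Bs ^ β := by
    intro Bs hBs
    obtain ⟨h0, _⟩ := hBs
    rcases eq_or_lt_of_le h0 with h | h
    · subst h
      simp [hU, hv, Real.zero_rpow (ne_of_gt hβ)]
    · have h1 : ¬ (0 ≤ -(Bs * cs)) := by nlinarith
      have h2 : (0:ℝ) ≤ Bs * (cl - cs) := by positivity
      rw [hU, hv, hv, if_neg h1, if_pos h2, neg_neg,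
        Real.mul_rpow h.le hcs.le, Real.mul_rpow h.le hcl.le]
      ring
  refine ⟨hcf, fun Bs hBs => ?_⟩
  have hD' : D ∈ Set.Icc (0:ℝ) D := ⟨hD.le, le_refl D⟩
  have h0' : (0:ℝ) ∈ Set.Icc (0:ℝ) D := ⟨le_refl 0, hD.le⟩
  rw [hcf Bs hBs]
  split_ifs with hc
  · rw [hcf D hD']
    have hK : 0 ≤ w₂ * (cl - cs) ^ β - l * w₁ * cs ^ β := by linarith
    exact mul_le_mul_of_nonneg_left
      (Real.rpow_le_rpow hBs.1 hBs.2 hβ.le) hK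
  · rw [hcf 0 h0', Real.zero_rpow (ne_of_gt hβ), mul_zero]
    have hK : w₂ * (cl - cs) ^ β - l * w₁ * cs ^ β < 0 := by
      push_neg at hc; linarith
    have : (0:ℝ) ≤ Bs ^ β := Real.rpow_nonneg hBs.1 β
    nlinarith
end

section
/- Under the high reference point R_p = D(π − c_s), the utility U_RPH(B_s) = −λ·w₁·(B_s·c_s + D·c_l − D·c_s)^β − λ·w₂·(D·(c_l − c_s) − B_s·(c_l − c_s))^β on [0, D] is strictly convex, so its maximum over [0, D] is attained at a boundary point B_s ∈ {0, D}. -/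
/-!
Each of the two terms of `U` is `-c · t ^ β` with `c > 0`, composed with a non-constant affine
function of `B_s` that stays nonnegative on `[0, D]`. Since `t ↦ t ^ β` is strictly concave for
`0 < β < 1`, each term is strictly convex, hence so is `U`, and a convex function on a segment
is bounded by its values at the endpoints.
-/

open Set

section

variable {𝕜 E β : Type*} [CommSemiring 𝕜] [PartialOrder 𝕜] [AddCommMonoid E] [SMul 𝕜 E]
  [AddCommMonoid β] [PartialOrder β] [Module 𝕜 β] [PosSMulStrictMono 𝕜 β] {s : Set E} {f : E → β}

theorem StrictConcaveOn.smul {c : 𝕜} (hc : 0 < c) (hf : StrictConcaveOn 𝕜 s f) :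
    StrictConcaveOn 𝕜 s fun x => c • f x :=
  ⟨hf.1, fun x hx y hy hxy a b ha hb hab =>
    calc
      a • c • f x + b • c • f y = c • (a • f x + b • f y) := by
        rw [smul_add, smul_comm c, smul_comm c]
      _ < c • f (a • x + b • y) := smul_lt_smul_of_pos_left (hf.2 hx hy hxy ha hb hab) hc⟩

end

section

variable {𝕜 E F β : Type*} [Field 𝕜] [LinearOrder 𝕜] [AddCommGroup E] [AddCommGroup F]
  [AddCommMonoid β] [PartialOrder β] [Module 𝕜 E] [Module 𝕜 F] [SMul 𝕜 β]

theorem StrictConcaveOn.comp_affineMap {f : F → β} {s : Set F} (hf : StrictConcaveOn 𝕜 s f)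
    (g : E →ᵃ[𝕜] F) (hg : Function.Injective g) : StrictConcaveOn 𝕜 (g ⁻¹' s) (f ∘ g) :=
  ⟨hf.1.affine_preimage _, fun x hx y hy hxy a b ha hb hab =>
    calc
      a • f (g x) + b • f (g y) < f (a • g x + b • g y) := hf.2 hx hy (hg.ne hxy) ha hb hab
      _ = f (g (a • x + b • y)) := by rw [Convex.combo_affine_apply hab]⟩

end

theorem strictConvexOn_neg_mul_rpow_affine {c a b p : ℝ} (hc : 0 < c) (ha : a ≠ 0)
    (hp₀ : 0 < p) (hp₁ : p < 1) :
    StrictConvexOn ℝ {x | 0 ≤ a * x + b} fun x => -c * (a * x + b) ^ p := by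
  set g : ℝ →ᵃ[ℝ] ℝ := AffineMap.lineMap b (a + b)
  have hg_apply (x : ℝ) : g x = a * x + b := by
    simp only [g, AffineMap.lineMap_apply_ring', add_sub_cancel_right, mul_comm]
  have hg : Function.Injective g := AffineMap.lineMap_injective ℝ (by simpa using ha)
  have h := (((Real.strictConcaveOn_rpow hp₀ hp₁).comp_affineMap g hg).smul hc).neg
  have hdom : g ⁻¹' Ici 0 = {x | 0 ≤ a * x + b} := by ext x; simp [hg_apply]
  rw [hdom] at h
  exact h.congr fun x _ => by simp [hg_apply]

theorem high_reference_point_convex_boundary_max_general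
    (D cl cs l β w₁ w₂ : ℝ)
    (hcs : 0 < cs) (hcscl : cs < cl)
    (hl : 0 < l) (hβ : 0 < β) (hβ1 : β < 1)
    (hw₁ : 0 < w₁) (hw₂ : 0 < w₂)
    (U : ℝ → ℝ)
    (hU : ∀ Bs : ℝ, U Bs =
      -l * w₁ * (Bs * cs + D * cl - D * cs) ^ β
      - l * w₂ * (D * (cl - cs) - Bs * (cl - cs)) ^ β) :
    StrictConvexOn ℝ (Set.Icc 0 D) U ∧
    (∀ Bs ∈ Set.Icc (0:ℝ) D, U Bs ≤ max (U 0) (U D)) := by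
  have hgap : 0 < cl - cs := sub_pos.2 hcscl
  have h₁ := (strictConvexOn_neg_mul_rpow_affine (b := D * (cl - cs)) (mul_pos hl hw₁)
    hcs.ne' hβ hβ1).subset (fun x hx => by
      simp only [mem_ofPred_eq]; nlinarith [hx.1, hx.2, hx.1.trans hx.2]) (convex_Icc 0 D)
  have h₂ := (strictConvexOn_neg_mul_rpow_affine (b := D * (cl - cs)) (mul_pos hl hw₂)
    (neg_ne_zero.2 hgap.ne') hβ hβ1).subset (fun x hx => by
      simp only [mem_ofPred_eq]; nlinarith [hx.2]) (convex_Icc 0 D)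
  have hU_convex : StrictConvexOn ℝ (Icc 0 D) U :=
    (h₁.add h₂).congr fun x _ => by rw [Pi.add_apply, hU]; ring_nf
  exact ⟨hU_convex, fun Bs hBs => hU_convex.convexOn.le_max_of_mem_Icc
    (left_mem_Icc.2 (hBs.1.trans hBs.2)) (right_mem_Icc.2 (hBs.1.trans hBs.2)) hBs⟩

/-- Under the high reference point `R_p = D(π - cs)`, the utility
`U_RPH(B) = -λ w₁ (B cs + D cl - D cs)^β - λ w₂ (D(cl - cs) - B(cl - cs))^β` is strictly
convex on `[0, D]`, so its maximum over `[0, D]` is attained at a boundary point. -/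
theorem high_reference_point_convex_boundary_max
    (D cl cs l β w₁ w₂ : ℝ)
    (hD : 0 < D) (hcs : 0 < cs) (hcscl : cs < cl)
    (hl : 0 < l) (hβ : 0 < β) (hβ1 : β < 1)
    (hw₁ : 0 < w₁) (hw₂ : 0 < w₂)
    (U : ℝ → ℝ)
    (hU : ∀ Bs : ℝ, U Bs =
      -l * w₁ * (Bs * cs + D * cl - D * cs) ^ β
      - l * w₂ * (D * (cl - cs) - Bs * (cl - cs)) ^ β) :
    StrictConvexOn ℝ (Set.Icc 0 D) U ∧
    (∀ Bs ∈ Set.Icc (0:ℝ) D, U Bs ≤ max (U 0) (U D)) :=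
  high_reference_point_convex_boundary_max_general D cl cs l β w₁ w₂ hcs hcscl hl hβ hβ1 hw₁ hw₂ U
    hU
end

section
/- Under EUT, if c_l·Σ_{i=1}^I p_i·α_i ≤ c_s, then the expected profit E[R(B_s)] = Σ_i p_i·(πD − B_s·c_s − max{D − B_s·α_i, 0}·c_l) is maximized over B_s ≥ 0 at B_s* = 0, with optimal value D·(π − c_l). -/
open Finset

/-- Under EUT, if `cl · Σ p_i α_i ≤ cs`, the expected profit is maximized over `B_s ≥ 0`
at `B_s* = 0`, with optimal value `D(π - cl)`. -/
theorem eut_no_sensing_optimal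
    (I : ℕ) (α p : Fin I → ℝ)
    (D cl cs pr : ℝ)
    (hD : 0 < D) (hcs : 0 < cs) (hcscl : cs < cl) (hclp : cl < pr)
    (hα : ∀ i, α i ∈ Set.Icc (0:ℝ) 1)
    (hp : ∀ i, 0 ≤ p i) (hpsum : ∑ i, p i = 1)
    (hcheap : cl * ∑ i, p i * α i ≤ cs)
    (ER : ℝ → ℝ)
    (hER : ∀ Bs : ℝ, ER Bs =
      ∑ i, p i * (pr * D - Bs * cs - max (D - Bs * α i) 0 * cl)) :
    (∀ Bs : ℝ, 0 ≤ Bs → ER Bs ≤ ER 0) ∧ ER 0 = D * (pr - cl) := by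
  have hcl : (0:ℝ) < cl := hcs.trans hcscl
  have h0 : ER 0 = D * (pr - cl) := by
    rw [hER]
    have : ∀ i : Fin I, p i * (pr * D - 0 * cs - max (D - 0 * α i) 0 * cl)
        = p i * (pr * D - D * cl) := by
      intro i
      have : max (D - 0 * α i) 0 = D := by
        rw [zero_mul, sub_zero, max_eq_left hD.le]
      rw [this]; ring
    rw [Finset.sum_congr rfl (fun i _ => this i), ← Finset.sum_mul, hpsum]
    ring
  refine ⟨fun Bs hBs => ?_, h0⟩
  rw [hER, h0]
  calc ∑ i, p i * (pr * D - Bs * cs - max (D - Bs * α i) 0 * cl)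
      ≤ ∑ i, (p i * (pr * D - Bs * cs - D * cl) + (Bs * cl) * (p i * α i)) := by
        apply Finset.sum_le_sum
        intro i _
        have h1 : (D - Bs * α i) * cl ≤ max (D - Bs * α i) 0 * cl :=
          mul_le_mul_of_nonneg_right (le_max_left _ _) hcl.le
        have h2 : p i * (pr * D - Bs * cs - max (D - Bs * α i) 0 * cl)
            ≤ p i * (pr * D - Bs * cs - (D - Bs * α i) * cl) :=
          mul_le_mul_of_nonneg_left (by linarith) (hp i)
        calc p i * (pr * D - Bs * cs - max (D - Bs * α i) 0 * cl)
            ≤ p i * (pr * D - Bs * cs - (D - Bs * α i) * cl) := h2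
          _ = p i * (pr * D - Bs * cs - D * cl) + (Bs * cl) * (p i * α i) := by ring
    _ = (pr * D - Bs * cs - D * cl) + (Bs * cl) * ∑ i, p i * α i := by
        rw [Finset.sum_add_distrib, ← Finset.sum_mul, hpsum, ← Finset.mul_sum]
        ring
    _ ≤ D * (pr - cl) := by nlinarith [mul_le_mul_of_nonneg_left hcheap hBs]
end
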